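/- Let f₁ > 0, let M ≥ 1 be a natural number, and let y(t) = Σ_{n∈ℤ} c(n)·exp(i n f₁ t) be a trigonometric polynomial whose Fourier support is contained in {n : 2^M < n ≤ 2^{M+1}} (the top octave band of a signal of bandwidth M+1 octaves). Then for every λ > 0, the function t ↦ |P_λ y(t)|², where P_λ is the Shannon band projection onto frequencies n f₁ with λ < n f₁ ≤ 2λ, is a trigonometric polynomial of fundamental frequency f₁ whose Fourier support is contained in {d ∈ ℤ : |d| ≤ 2^M − 1}; i.e., the scalogram of the high-pass detail of y has bandwidth of at most M octaves. -/

import Mathlib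

open Complex

/-- Evaluation of the trigonometric polynomial of fundamental frequency `f₁` with
coefficients `c : ℤ → ℂ` (finitely many nonzero): `t ↦ Σ_n c(n)·exp(i n f₁ t)`. -/
noncomputable def trigEval (f₁ : ℝ) (c : ℤ → ℂ) : ℝ → ℂ :=
  fun t => ∑ᶠ n : ℤ, c n * Complex.exp ((n : ℂ) * (f₁ : ℂ) * (t : ℂ) * Complex.I)

/-- Coefficients of the Shannon band projection `P_l`: keep only the terms whose
frequency `n·f₁` lies in the octave band `(l, 2l]`. -/
noncomputable def bandProjCoeff (f₁ l : ℝ) (c : ℤ → ℂ) : ℤ → ℂ :=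
  fun n => if l < (n : ℝ) * f₁ ∧ (n : ℝ) * f₁ ≤ 2 * l then c n else 0

/-!
Write `a` for the coefficients of `P_l y`. The scalogram `P_l y · conj (P_l y)` is again a
trigonometric polynomial, whose coefficients are the autocorrelation
`d ↦ Σ_m a(m) · conj (a(m - d))`. Since `P_l` only deletes coefficients, `a` is still supported
in `(2^M, 2^{M+1}]`, an interval of `2^M` integers, so `a(m)` and `a(m - d)` can both be nonzero
only when `|d| ≤ 2^M - 1`.
-/

open ComplexConjugate

noncomputable def coeffConv (a b : ℤ → ℂ) (d : ℤ) : ℂ :=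
  ∑ᶠ m : ℤ, a m * b (d - m)

noncomputable def coeffStar (a : ℤ → ℂ) (n : ℤ) : ℂ :=
  conj (a (-n))

lemma coeffStar_support_finite {a : ℤ → ℂ} (ha : a.support.Finite) :
    (coeffStar a).support.Finite :=
  (ha.preimage neg_injective.injOn).subset fun n hn => by
    simpa [coeffStar] using hn

lemma exists_ne_zero_of_coeffConv_ne_zero {a b : ℤ → ℂ} {d : ℤ} (h : coeffConv a b d ≠ 0) :
    ∃ m, a m ≠ 0 ∧ b (d - m) ≠ 0 := by
  by_contra! hab
  refine h (finsum_eq_zero_of_forall_eq_zero fun m => ?_)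
  by_cases ham : a m = 0
  · simp [ham]
  · simp [hab m ham]

lemma abs_le_of_coeffConv_coeffStar_ne_zero {a : ℤ → ℂ} {L U : ℤ}
    (ha : a.support ⊆ Set.Ioc L U) {d : ℤ} (h : coeffConv a (coeffStar a) d ≠ 0) :
    |d| ≤ U - L - 1 := by
  obtain ⟨m, ham, hamd⟩ := exists_ne_zero_of_coeffConv_ne_zero h
  have hm := ha ham
  have hmd := ha (show a (m - d) ≠ 0 by simpa [coeffStar] using hamd)
  simp only [Set.mem_Ioc] at hm hmd
  rw [abs_le]
  omega

section TrigEval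

variable {f₁ t : ℝ}

lemma cexp_int_mul_add (m n : ℤ) :
    exp ((m : ℂ) * f₁ * t * I) * exp ((n : ℂ) * f₁ * t * I)
      = exp (((m + n : ℤ) : ℂ) * f₁ * t * I) := by
  rw [← Complex.exp_add]
  push_cast
  ring_nf

lemma conj_cexp_int_mul (n : ℤ) :
    conj (exp ((n : ℂ) * f₁ * t * I)) = exp (((-n : ℤ) : ℂ) * f₁ * t * I) := by
  rw [← Complex.exp_conj]
  simp

lemma trigEval_mul {a b : ℤ → ℂ} (ha : a.support.Finite) (hb : b.support.Finite) :
    trigEval f₁ a t * trigEval f₁ b t = trigEval f₁ (coeffConv a b) t := by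
  set e : ℤ → ℂ := fun n => exp ((n : ℂ) * f₁ * t * I)
  let shear : ℤ × ℤ ≃ ℤ × ℤ :=
    { toFun := fun q => (q.2, q.1 - q.2)
      invFun := fun p => (p.1 + p.2, p.1)
      left_inv := fun q => by simp
      right_inv := fun p => by simp }
  set F : ℤ × ℤ → ℂ := fun p => a p.1 * b p.2 * e (p.1 + p.2)
  have hF : F.support.Finite := (ha.prod hb).subset fun p hp => by
    simp only [Function.mem_support, ne_eq, mul_eq_zero, not_or, F] at hp
    exact ⟨hp.1.1, hp.1.2⟩
  have hFshear : (F ∘ shear).support.Finite := by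
    rw [Function.support_comp_eq_preimage]
    exact hF.preimage shear.injective.injOn
  calc trigEval f₁ a t * trigEval f₁ b t = ∑ᶠ m, ∑ᶠ n, F (m, n) := by
        rw [trigEval, trigEval, finsum_mul]
        simp_rw [mul_finsum]
        refine finsum_congr fun m => finsum_congr fun n => ?_
        simp only [F, e, ← cexp_int_mul_add]
        ring
    _ = ∑ᶠ q, F (shear q) := by rw [← finsum_curry F hF, finsum_comp_equiv shear]
    _ = trigEval f₁ (coeffConv a b) t := by
        rw [← Function.comp_def F shear, finsum_curry _ hFshear]
        simp only [trigEval, coeffConv, finsum_mul]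
        refine finsum_congr fun d => finsum_congr fun m => ?_
        simp [F, e, shear]

lemma conj_trigEval {a : ℤ → ℂ} (ha : a.support.Finite) :
    conj (trigEval f₁ a t) = trigEval f₁ (coeffStar a) t := by
  have hsummand : (fun n => a n * exp ((n : ℂ) * f₁ * t * I)).support.Finite :=
    ha.subset fun n hn => left_ne_zero_of_mul hn
  rw [trigEval, map_finsum _ hsummand, ← finsum_comp_equiv (Equiv.neg ℤ)]
  simp only [trigEval, coeffStar, Equiv.neg_apply, map_mul, conj_cexp_int_mul, neg_neg]

lemma trigEval_mul_conj {a : ℤ → ℂ} (ha : a.support.Finite) :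
    trigEval f₁ a t * conj (trigEval f₁ a t) = trigEval f₁ (coeffConv a (coeffStar a)) t := by
  rw [conj_trigEval ha, trigEval_mul ha (coeffStar_support_finite ha)]

end TrigEval

lemma ne_zero_of_bandProjCoeff_ne_zero {f₁ l : ℝ} {c : ℤ → ℂ} {n : ℤ}
    (h : bandProjCoeff f₁ l c n ≠ 0) : c n ≠ 0 := by
  contrapose! h
  simp [bandProjCoeff, h]

theorem scalogram_of_top_octave_bandwidth_general
    (f₁ : ℝ) (M : ℕ) (c : ℤ → ℂ)
    (hsupp : ∀ n : ℤ, c n ≠ 0 → (2 : ℤ) ^ M < n ∧ n ≤ 2 ^ (M + 1))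
    (l : ℝ) :
    ∃ b : ℤ → ℂ,
      (∀ d : ℤ, b d ≠ 0 → |d| ≤ 2 ^ M - 1) ∧
      (∀ t : ℝ,
        trigEval f₁ (bandProjCoeff f₁ l c) t
            * (starRingEnd ℂ) (trigEval f₁ (bandProjCoeff f₁ l c) t)
          = trigEval f₁ b t) := by
  set a := bandProjCoeff f₁ l c
  have ha : a.support ⊆ Set.Ioc (2 ^ M) (2 ^ (M + 1)) := fun n hn =>
    hsupp n (ne_zero_of_bandProjCoeff_ne_zero hn)
  refine ⟨coeffConv a (coeffStar a), fun d hd => ?_,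
    fun t => trigEval_mul_conj ((Set.finite_Ioc _ _).subset ha)⟩
  have hd_le := abs_le_of_coeffConv_coeffStar_ne_zero ha hd
  rw [pow_succ] at hd_le
  linarith

/-- induction step of the paper's Theorem 1. If the Fourier support of
`y(t) = Σ_n c(n)·exp(i n f₁ t)` is contained in the top octave band
`{n : 2^M < n ≤ 2^{M+1}}` with `M ≥ 1`, then for every scale `l > 0` the Shannon
scalogram `t ↦ |P_l y(t)|²` is a trigonometric polynomial of fundamental frequency `f₁`
whose Fourier support is contained in `{d : |d| ≤ 2^M − 1}`, i.e. it has a bandwidth of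
at most `M` octaves. -/
theorem scalogram_of_top_octave_bandwidth
    (f₁ : ℝ) (hf₁ : 0 < f₁) (M : ℕ) (hM : 1 ≤ M) (c : ℤ → ℂ)
    (hsupp : ∀ n : ℤ, c n ≠ 0 → (2 : ℤ) ^ M < n ∧ n ≤ 2 ^ (M + 1))
    (y : ℝ → ℂ) (hy : ∀ t : ℝ, y t = trigEval f₁ c t)
    (l : ℝ) (hl : 0 < l) :
    ∃ b : ℤ → ℂ,
      (∀ d : ℤ, b d ≠ 0 → |d| ≤ 2 ^ M - 1) ∧
      (∀ t : ℝ,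
        trigEval f₁ (bandProjCoeff f₁ l c) t
            * (starRingEnd ℂ) (trigEval f₁ (bandProjCoeff f₁ l c) t)
          = trigEval f₁ b t) :=
  scalogram_of_top_octave_bandwidth_general f₁ M c hsupp l
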